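/- Let g = s_0 + s_1 z + ... + s_n z^n ∈ ℤ[z] be a primitive polynomial of degree n with s_0·s_n ≠ 0 such that |s_n| = p^k · d for some positive integers k and d and a prime p with p ∤ d. Let Δ be a positive integer with Δ ≤ n such that g has no nonconstant factor of degree less than Δ in ℤ[z], and suppose that every complex zero of g lies in the region |z| > d^{1/Δ}. Suppose further that |s_0| > 1 and |s_0|/q ≤ |s_n|, where q is the smallest prime divisor of |s_0|. Then g is a product of at most min_{1 ≤ i ≤ n} { k, i + v_p(s_{n−i}) } irreducible polynomials in ℤ[z]. In particular, if k = 1, or if p ∤ s_{n−1}, then g is irreducible in ℤ[z]. -/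

import Mathlib

/-!
Factor `g = u · ∏ gᵢ` into `m` irreducibles. Primitivity makes every `gᵢ` nonconstant, hence of
degree at least `Δ`, and as the roots of `gᵢ` have modulus `> d^{1/Δ}`, their product gives
`|gᵢ(0)| > d · |lc gᵢ|`. If `m ≥ 2` and some `lc gᵢ` were prime to `p`, it would divide `d`; since
`|gᵢ(0)| ≥ 2` has all its prime factors `≥ q`, multiplying the bounds would give `|s₀| > q |sₙ|`.
So `p` divides every `lc gᵢ`, and then the coefficient of `z^(n-i)` in the product is divisible by
`p^(m-i)`: this gives `m ≤ i + v_p(s_{n-i})`, and `i = 0` gives `m ≤ v_p(sₙ) = k`.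
-/

open Polynomial

/-- `v_p(a)` with values in `ℕ∞`, where `v_p(0) = ∞`. -/
noncomputable def intVal (p : ℕ) (a : ℤ) : ℕ∞ :=
  if a = 0 then ⊤ else (padicValInt p a : ℕ∞)

theorem le_add_intVal_of_pow_dvd {p : ℕ} (hp : p ≠ 1) {a : ℤ} {m i : ℕ}
    (h : (p : ℤ) ^ (m - i) ∣ a) : (m : ℕ∞) ≤ i + intVal p a := by
  unfold intVal
  split_ifs with ha
  · simp
  · have := ((padicValInt_dvd_iff_of_ne_one hp _ _).mp h).resolve_left ha
    exact_mod_cast (by omega : m ≤ i + padicValInt p a)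

theorem intVal_eq_zero_of_not_dvd {p : ℕ} {a : ℤ} (h : ¬ (p : ℤ) ∣ a) : intVal p a = 0 := by
  rw [intVal, if_neg (by rintro rfl; exact h (dvd_zero _)), padicValInt.eq_zero_of_not_dvd h]
  rfl

theorem intVal_eq_of_natAbs_eq_pow_mul {p k d : ℕ} (hp : p.Prime) (hpd : ¬ p ∣ d) {a : ℤ}
    (ha : a.natAbs = p ^ k * d) : intVal p a = k := by
  have : Fact p.Prime := ⟨hp⟩
  have hd : d ≠ 0 := by rintro rfl; exact hpd (dvd_zero p)
  have hp0 : p ^ k ≠ 0 := pow_ne_zero k hp.ne_zero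
  rw [intVal, if_neg (Int.natAbs_ne_zero.mp (by rw [ha]; positivity)), padicValInt, ha,
    padicValNat.mul hp0 hd, padicValNat.prime_pow, padicValNat.eq_zero_of_not_dvd hpd]
  rfl

namespace Multiset

variable {ι : Type*} {s : Multiset ι} {a b : ι → ℕ} {d : ℕ}

theorem mul_prod_map_lt_prod_map (hd : 0 < d) (ha : ∀ j ∈ s, 0 < a j)
    (hab : ∀ j ∈ s, d * a j < b j) {x : ι} (hx : x ∈ s) (hax : a x ≤ d) (hs : 2 ≤ card s) :
    b x * (s.map a).prod < (s.map b).prod := by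
  obtain ⟨t, rfl⟩ := exists_cons_of_mem hx
  have ht : t ≠ 0 := by rintro rfl; simp at hs
  have hbx : 0 < b x := (hab x (mem_cons_self x t)).trans_le' (Nat.zero_le _)
  simp only [map_cons, prod_cons]
  calc b x * (a x * (t.map a).prod) ≤ b x * (d ^ card t * (t.map a).prod) := by
        gcongr
        exact hax.trans (Nat.le_self_pow (card_pos.mpr ht).ne' d)
    _ = b x * (t.map fun j => d * a j).prod := by
        rw [prod_map_mul, map_const', prod_replicate]
    _ < b x * (t.map b).prod := by
        gcongr
        refine prod_map_lt_prod_map ht _ _ (fun j hj => ?_) (fun j hj => hab j (mem_cons_of_mem hj))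
        have := ha j (mem_cons_of_mem hj)
        positivity

theorem prime_dvd_of_prod_map_le {p k q : ℕ} (hp : p.Prime) (hd : 0 < d)
    (ha : ∀ j ∈ s, 0 < a j) (hab : ∀ j ∈ s, d * a j < b j) (hprod : (s.map a).prod = p ^ k * d)
    (hqmin : ∀ q', q'.Prime → q' ∣ (s.map b).prod → q ≤ q')
    (hcond : (s.map b).prod ≤ q * (p ^ k * d)) (hs : 2 ≤ card s) : ∀ x ∈ s, p ∣ a x := by
  intro x hx
  by_contra hpx
  have hax : a x ≤ d := by
    have hdvd : a x ∣ p ^ k * d := hprod ▸ dvd_prod (mem_map_of_mem a hx)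
    exact Nat.le_of_dvd hd
      ((Nat.Coprime.pow_left k (hp.coprime_iff_not_dvd.mpr hpx)).symm.dvd_of_dvd_mul_left hdvd)
  have hbx : 2 ≤ b x := by
    have := hab x hx
    have := Nat.mul_pos hd (ha x hx)
    omega
  have hqb : q ≤ b x :=
    (hqmin _ (Nat.minFac_prime (by omega))
      ((Nat.minFac_dvd _).trans (dvd_prod (mem_map_of_mem b hx)))).trans (Nat.minFac_le (by omega))
  have hlt := mul_prod_map_lt_prod_map hd ha hab hx hax hs
  rw [hprod] at hlt
  have : q * (p ^ k * d) ≤ b x * (p ^ k * d) := Nat.mul_le_mul_right _ hqb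
  omega

end Multiset

namespace Polynomial

theorem IsPrimitive.natDegree_pos_of_irreducible_dvd {R : Type*} [CommSemiring R] {g h : R[X]}
    (hg : g.IsPrimitive) (hh : Irreducible h) (hhg : h ∣ g) : 0 < h.natDegree := by
  rw [Nat.pos_iff_ne_zero]
  intro h0
  rw [eq_C_of_natDegree_eq_zero h0] at hh hhg
  exact hh.not_isUnit (isUnit_C.mpr (hg _ hhg))

theorem exists_C_unit_mul_prod_irreducible {R : Type*} [CommRing R] [IsDomain R]
    [WfDvdMonoid R[X]] {g : R[X]} (hg : g ≠ 0) :
    ∃ (u : Rˣ) (gs : Multiset R[X]), (∀ h ∈ gs, Irreducible h) ∧ g = C (u : R) * gs.prod := by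
  obtain ⟨gs, hirr, w, hw⟩ := WfDvdMonoid.exists_factors g hg
  obtain ⟨r, hr, hrw⟩ := isUnit_iff.mp w.isUnit
  exact ⟨hr.unit, gs, hirr, by rw [← hw, ← hrw, mul_comm]; rfl⟩

theorem irreducible_C_unit_mul_prod {R : Type*} [CommRing R] (u : Rˣ) {gs : Multiset R[X]}
    (hirr : ∀ h ∈ gs, Irreducible h) (hcard : Multiset.card gs = 1) :
    Irreducible (C (u : R) * gs.prod) := by
  obtain ⟨h, rfl⟩ := Multiset.card_eq_one.mp hcard
  rw [Multiset.prod_singleton, irreducible_isUnit_mul (isUnit_C.mpr u.isUnit)]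
  exact hirr h (Multiset.mem_singleton_self h)

theorem natAbs_coeff_zero_C_unit_mul_prod (u : ℤˣ) (gs : Multiset ℤ[X]) :
    ((C (u : ℤ) * gs.prod).coeff 0).natAbs = (gs.map fun h => (h.coeff 0).natAbs).prod := by
  rw [coeff_C_mul, Int.natAbs_mul, Int.natAbs_of_isUnit u.isUnit, one_mul,
    coeff_zero_multiset_prod, ← Int.natAbsHom_apply, map_multiset_prod, Multiset.map_map]
  rfl

theorem natAbs_leadingCoeff_C_unit_mul_prod (u : ℤˣ) (gs : Multiset ℤ[X]) :
    (C (u : ℤ) * gs.prod).leadingCoeff.natAbs = (gs.map fun h => h.leadingCoeff.natAbs).prod := by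
  rw [leadingCoeff_mul, leadingCoeff_C, Int.natAbs_mul, Int.natAbs_of_isUnit u.isUnit, one_mul,
    leadingCoeff_multiset_prod, ← Int.natAbsHom_apply, map_multiset_prod, Multiset.map_map]
  rfl

theorem norm_leadingCoeff_mul_pow_lt_norm_coeff_zero {K : Type*} [NormedField K] [IsAlgClosed K]
    {f : K[X]} (hf : 0 < f.natDegree) {c : ℝ} (hc : 0 < c) (hroots : ∀ z ∈ f.roots, c < ‖z‖) :
    ‖f.leadingCoeff‖ * c ^ f.natDegree < ‖f.coeff 0‖ := by
  have hsplit := IsAlgClosed.splits f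
  have hroots_ne : f.roots ≠ 0 := by
    rw [← Multiset.card_pos, ← hsplit.natDegree_eq_card_roots]; exact hf
  have hlc : 0 < ‖f.leadingCoeff‖ :=
    norm_pos_iff.mpr (leadingCoeff_ne_zero.mpr (ne_zero_of_natDegree_gt hf))
  rw [coeff_zero_eq_eval_zero, hsplit.eval_eq_prod_roots, norm_mul,
    ← normHom_apply (f.roots.map _).prod, map_multiset_prod, Multiset.map_map,
    hsplit.natDegree_eq_card_roots, ← Multiset.prod_replicate, ← Multiset.map_const' f.roots c]
  refine mul_lt_mul_of_pos_left (Multiset.prod_map_lt_prod_map hroots_ne _ _ (fun _ _ => hc) ?_) hlc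
  intro z hz
  simpa using hroots z hz

theorem mul_natAbs_leadingCoeff_lt_natAbs_coeff_zero {h : ℤ[X]} {d Δ : ℕ} (hd : 0 < d)
    (hΔ : 0 < Δ) (hdeg : Δ ≤ h.natDegree)
    (hroots : ∀ z ∈ h.aroots ℂ, (d : ℝ) ^ ((1 : ℝ) / Δ) < ‖z‖) :
    d * h.leadingCoeff.natAbs < (h.coeff 0).natAbs := by
  set c : ℝ := (d : ℝ) ^ ((1 : ℝ) / Δ)
  have hc : 1 ≤ c := Real.one_le_rpow (by exact_mod_cast hd) (by positivity)
  have hcΔ : c ^ Δ = d := by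
    rw [← Real.rpow_natCast, ← Real.rpow_mul (by positivity), one_div_mul_cancel (by positivity),
      Real.rpow_one]
  have hinj : Function.Injective (algebraMap ℤ ℂ) := (algebraMap ℤ ℂ).injective_int
  have key := norm_leadingCoeff_mul_pow_lt_norm_coeff_zero
    (f := h.map (algebraMap ℤ ℂ)) (by rw [natDegree_map_eq_of_injective hinj]; omega)
    (by positivity) hroots
  rw [natDegree_map_eq_of_injective hinj, leadingCoeff_map_of_injective hinj, coeff_map] at key
  simp only [algebraMap_int_eq, eq_intCast, Complex.norm_intCast, ← Int.cast_abs,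
    Int.abs_eq_natAbs, Int.cast_natCast] at key
  have hle : (d : ℝ) * h.leadingCoeff.natAbs ≤ h.leadingCoeff.natAbs * c ^ h.natDegree := by
    rw [mul_comm]
    gcongr
    exact hcΔ ▸ pow_le_pow_right₀ hc hdeg
  exact_mod_cast hle.trans_lt key

section CoeffDvd

variable {R : Type*} [CommSemiring R] (p : R)

theorem pow_dvd_coeff_mul_of_dvd_leadingCoeff {f g : R[X]} (hf : p ∣ f.leadingCoeff) {m D : ℕ}
    (hgD : g.natDegree ≤ D) (hg : ∀ t, p ^ (m - (D - t)) ∣ g.coeff t) (t : ℕ) :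
    p ^ (m + 1 - (f.natDegree + D - t)) ∣ (f * g).coeff t := by
  rw [coeff_mul]
  refine Finset.dvd_sum fun ⟨x, y⟩ hxy => ?_
  have hxyt : x + y = t := Finset.HasAntidiagonal.mem_antidiagonal.mp hxy
  rcases lt_or_ge f.natDegree x with hx | hx
  · simp [coeff_eq_zero_of_natDegree_lt hx]
  rcases lt_or_ge D y with hy | hy
  · simp [coeff_eq_zero_of_natDegree_lt (hgD.trans_lt hy)]
  rcases hx.eq_or_lt with hxf | hxf
  · calc p ^ (m + 1 - (f.natDegree + D - t)) ∣ p * p ^ (m - (D - y)) := by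
          rw [← pow_succ']; exact pow_dvd_pow _ (by omega)
      _ ∣ f.coeff x * g.coeff y := mul_dvd_mul (by rwa [hxf]) (hg y)
  · exact ((pow_dvd_pow _ (by omega)).trans (hg y)).mul_left _

theorem pow_dvd_coeff_multiset_prod (s : Multiset R[X]) (hs : ∀ f ∈ s, p ∣ f.leadingCoeff)
    (t : ℕ) : p ^ (Multiset.card s - ((s.map natDegree).sum - t)) ∣ s.prod.coeff t := by
  induction s using Multiset.induction_on generalizing t with
  | empty => simp
  | cons f s ih =>
    simp only [Multiset.map_cons, Multiset.sum_cons, Multiset.card_cons, Multiset.prod_cons]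
    exact pow_dvd_coeff_mul_of_dvd_leadingCoeff p (hs f (Multiset.mem_cons_self f s))
      (natDegree_multiset_prod_le s) (ih fun g hg => hs g (Multiset.mem_cons_of_mem hg)) t

end CoeffDvd

theorem card_le_add_intVal_coeff {p : ℕ} (hp : p ≠ 1) (u : ℤ) {gs : Multiset ℤ[X]}
    (hgs : ∀ h ∈ gs, (p : ℤ) ∣ h.leadingCoeff) (i : ℕ) :
    (Multiset.card gs : ℕ∞) ≤
      i + intVal p ((C u * gs.prod).coeff ((gs.map natDegree).sum - i)) := by
  set D := (gs.map natDegree).sum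
  have hdvd := (pow_dvd_coeff_multiset_prod (p : ℤ) gs hgs (D - i)).mul_left u
  rw [← coeff_C_mul] at hdvd
  calc (Multiset.card gs : ℕ∞) ≤ ((D - (D - i) : ℕ) : ℕ∞) + intVal p _ :=
        le_add_intVal_of_pow_dvd hp hdvd
    _ ≤ i + _ := by gcongr; exact_mod_cast (by omega : D - (D - i) ≤ i)

theorem card_le_one_or_card_le_add_intVal {g : ℤ[X]} {u : ℤˣ} {gs : Multiset ℤ[X]}
    (hgs : g = C (u : ℤ) * gs.prod) (hgs0 : ∀ h ∈ gs, h ≠ 0) {p k d q : ℕ} (hp : p.Prime)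
    (hd : 0 < d) (hbound : ∀ h ∈ gs, d * h.leadingCoeff.natAbs < (h.coeff 0).natAbs)
    (hlc : g.leadingCoeff.natAbs = p ^ k * d)
    (hqmin : ∀ q', q'.Prime → q' ∣ (g.coeff 0).natAbs → q ≤ q')
    (hcond : (g.coeff 0).natAbs ≤ q * (p ^ k * d)) :
    Multiset.card gs ≤ 1 ∨
      ∀ i, (Multiset.card gs : ℕ∞) ≤ i + intVal p (g.coeff (g.natDegree - i)) := by
  subst hgs
  refine (le_or_gt _ 1).imp id fun h2 i => ?_
  rw [natAbs_leadingCoeff_C_unit_mul_prod] at hlc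
  rw [natAbs_coeff_zero_C_unit_mul_prod] at hqmin hcond
  have hlc_pos : ∀ h ∈ gs, 0 < h.leadingCoeff.natAbs := fun h hh =>
    Int.natAbs_pos.mpr (leadingCoeff_ne_zero.mpr (hgs0 h hh))
  have hp_lc := Multiset.prime_dvd_of_prod_map_le hp hd hlc_pos hbound hlc hqmin hcond h2
  rw [natDegree_C_mul u.ne_zero, natDegree_multiset_prod _ fun h0 => hgs0 0 h0 rfl]
  exact card_le_add_intVal_coeff hp.ne_one u (fun h hh => Int.natCast_dvd.mpr (hp_lc h hh)) i

end Polynomial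

theorem statement8_general
    (g : Polynomial ℤ) (n : ℕ) (hdeg : g.natDegree = n)
    (hs : g.coeff 0 * g.coeff n ≠ 0) (hprim : g.IsPrimitive)
    (k d : ℕ) (hk : 0 < k) (hd : 0 < d)
    (p : ℕ) (hp : Nat.Prime p) (hpd : ¬ p ∣ d)
    (hsn : (g.coeff n).natAbs = p ^ k * d)
    (Δ : ℕ) (hΔ0 : 0 < Δ) (hΔn : Δ ≤ n)
    (hΔ : ∀ h : Polynomial ℤ, h ∣ g → 0 < h.natDegree → Δ ≤ h.natDegree)
    (hzeros : ∀ z : ℂ, Polynomial.aeval z g = 0 →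
      (d : ℝ) ^ ((1 : ℝ) / (Δ : ℝ)) < ‖z‖)
    (q : ℕ) (hq : Nat.Prime q)
    (hqmin : ∀ q', Nat.Prime q' → q' ∣ (g.coeff 0).natAbs → q ≤ q')
    (hcond : ((g.coeff 0).natAbs : ℚ) / (q : ℚ) ≤ ((g.coeff n).natAbs : ℚ)) :
    (∃ (u : ℤˣ) (gs : Multiset (Polynomial ℤ)),
      (Multiset.card gs : ℕ∞) ≤
        (Finset.Icc 1 n).inf
          (fun i => min (k : ℕ∞) ((i : ℕ∞) + intVal p (g.coeff (n - i)))) ∧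
      (∀ h ∈ gs, 0 < h.natDegree ∧ Irreducible h) ∧
      g = Polynomial.C (u : ℤ) * gs.prod) ∧
    ((k = 1 ∨ ¬ ((p : ℤ) ∣ g.coeff (n - 1))) → Irreducible g) := by
  obtain ⟨u, gs, hirr, hgs⟩ :=
    exists_C_unit_mul_prod_irreducible (show g ≠ 0 by rintro rfl; simp at hs)
  have hdvd : ∀ h ∈ gs, h ∣ g := fun h hh => hgs ▸ (Multiset.dvd_prod hh).mul_left _
  have hpos : ∀ h ∈ gs, 0 < h.natDegree := fun h hh =>
    hprim.natDegree_pos_of_irreducible_dvd (hirr h hh) (hdvd h hh)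
  have hbound : ∀ h ∈ gs, d * h.leadingCoeff.natAbs < (h.coeff 0).natAbs := fun h hh =>
    mul_natAbs_leadingCoeff_lt_natAbs_coeff_zero hd hΔ0 (hΔ h (hdvd h hh) (hpos h hh))
      fun z hz => hzeros z (aeval_eq_zero_of_dvd_aeval_eq_zero (hdvd h hh) (mem_aroots.mp hz).2)
  have hcond' : (g.coeff 0).natAbs ≤ q * (p ^ k * d) := by
    rw [div_le_iff₀ (by exact_mod_cast hq.pos), hsn] at hcond
    exact_mod_cast hcond.trans_eq (mul_comm _ _)
  have hsmall := card_le_one_or_card_le_add_intVal hgs (fun h hh => (hirr h hh).ne_zero) hp hd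
    hbound (by rwa [leadingCoeff, hdeg]) hqmin hcond'
  rw [hdeg] at hsmall
  have hcard_k : (Multiset.card gs : ℕ∞) ≤ k := hsmall.elim
    (fun h1 => by exact_mod_cast h1.trans hk)
    (fun h => by simpa [intVal_eq_of_natAbs_eq_pow_mul hp hpd hsn] using h 0)
  have hcard_i : ∀ i ≥ 1, (Multiset.card gs : ℕ∞) ≤ i + intVal p (g.coeff (n - i)) :=
    fun i hi => hsmall.elim (fun h1 => le_add_right (by exact_mod_cast h1.trans hi)) (· i)
  refine ⟨⟨u, gs, Finset.le_inf fun i hi => le_min hcard_k (hcard_i i (Finset.mem_Icc.mp hi).1),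
    fun h hh => ⟨hpos h hh, hirr h hh⟩, hgs⟩,
    fun hcase => hgs ▸ irreducible_C_unit_mul_prod u hirr ?_⟩
  have hcard_pos : 0 < Multiset.card gs := Multiset.card_pos.mpr fun h0 => by
    simp only [hgs, eq_intCast, h0, Multiset.prod_zero, mul_one, natDegree_intCast] at hdeg
    omega
  have hcard_le : (Multiset.card gs : ℕ∞) ≤ 1 := by
    rcases hcase with rfl | hndvd
    · exact_mod_cast hcard_k
    · simpa [intVal_eq_zero_of_not_dvd hndvd] using hcard_i 1 le_rfl
  exact le_antisymm (by exact_mod_cast hcard_le) hcard_pos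

/-- Lemma 5: let `g = s_0 + s_1 z + ⋯ + s_n z^n ∈ ℤ[z]` be primitive of degree `n`
with `s_0 s_n ≠ 0` and `|s_n| = p^k d` for positive integers `k, d` and a prime
`p ∤ d`. Let `Δ ≤ n` be a positive integer such that `g` has no nonconstant factor
of degree less than `Δ` in `ℤ[z]`, and suppose every complex zero of `g` lies in the
region `|z| > d^{1/Δ}`. Suppose further that `|s_0| > 1` and `|s_0|/q ≤ |s_n|`,
where `q` is the smallest prime divisor of `|s_0|`. Then `g` is a product of at most
`min_{1 ≤ i ≤ n} {k, i + v_p(s_{n-i})}` irreducible polynomials in `ℤ[z]` (with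
`v_p(0) = ∞`); in particular, if `k = 1` or `p ∤ s_{n-1}`, then `g` is
irreducible. -/
theorem statement8
    (g : Polynomial ℤ) (n : ℕ) (hdeg : g.natDegree = n)
    (hs : g.coeff 0 * g.coeff n ≠ 0) (hprim : g.IsPrimitive)
    (k d : ℕ) (hk : 0 < k) (hd : 0 < d)
    (p : ℕ) (hp : Nat.Prime p) (hpd : ¬ p ∣ d)
    (hsn : (g.coeff n).natAbs = p ^ k * d)
    (Δ : ℕ) (hΔ0 : 0 < Δ) (hΔn : Δ ≤ n)
    (hΔ : ∀ h : Polynomial ℤ, h ∣ g → 0 < h.natDegree → Δ ≤ h.natDegree)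
    (hzeros : ∀ z : ℂ, Polynomial.aeval z g = 0 →
      (d : ℝ) ^ ((1 : ℝ) / (Δ : ℝ)) < ‖z‖)
    (hs0 : 1 < (g.coeff 0).natAbs)
    (q : ℕ) (hq : Nat.Prime q) (hqdvd : q ∣ (g.coeff 0).natAbs)
    (hqmin : ∀ q', Nat.Prime q' → q' ∣ (g.coeff 0).natAbs → q ≤ q')
    (hcond : ((g.coeff 0).natAbs : ℚ) / (q : ℚ) ≤ ((g.coeff n).natAbs : ℚ)) :
    (∃ (u : ℤˣ) (gs : Multiset (Polynomial ℤ)),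
      (Multiset.card gs : ℕ∞) ≤
        (Finset.Icc 1 n).inf
          (fun i => min (k : ℕ∞) ((i : ℕ∞) + intVal p (g.coeff (n - i)))) ∧
      (∀ h ∈ gs, 0 < h.natDegree ∧ Irreducible h) ∧
      g = Polynomial.C (u : ℤ) * gs.prod) ∧
    ((k = 1 ∨ ¬ ((p : ℤ) ∣ g.coeff (n - 1))) → Irreducible g) :=
  statement8_general g n hdeg hs hprim k d hk hd p hp hpd hsn Δ hΔ0 hΔn hΔ hzeros q hq hqmin hcond
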